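/- If X has FTG distribution with parameters α ∈ ℝ, θ > 0, ρ > 0, then Var[X] = (α + (1+ρ-α)μ - μ²)/θ², where μ = e^{-ρ} ρ^α / Γ(α,ρ). -/

import Mathlib

open MeasureTheory Real Filter Set

noncomputable def uGamma (a r : ℝ) : ℝ := ∫ t in Set.Ioi r, t ^ (a - 1) * Real.exp (-t)

noncomputable def ftg (a θ ρ x : ℝ) : ℝ :=
  θ * (ρ + θ * x) ^ (a - 1) * Real.exp (-(ρ + θ * x)) / uGamma a ρ

noncomputable def pareto (a σ x : ℝ) : ℝ := -a * σ⁻¹ * (1 + x / σ) ^ (a - 1)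

/-!
The substitution `t = ρ + θ x` turns the variance integral into
`θ⁻² Γ(α, ρ)⁻¹ ∫_ρ^∞ (t - c)² t^(α-1) e^(-t) dt` with `c = α + μ`, a combination of
`Γ(α + 2, ρ)`, `Γ(α + 1, ρ)` and `Γ(α, ρ)`. Integration by parts gives the recurrence
`Γ(a + 1, ρ) = a Γ(a, ρ) + ρ^a e^(-ρ)`; in particular `Γ(α + 1, ρ) = c Γ(α, ρ)`, so `c` is
the mean of `θ X + ρ`, and two steps of the recurrence express everything through `Γ(α, ρ)`
and `μ`.
-/

lemma integrableOn_rpow_mul_exp_neg_Ioi (s : ℝ) {r : ℝ} (hr : 0 < r) :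
    IntegrableOn (fun t : ℝ => t ^ s * exp (-t)) (Ioi r) := by
  refine integrable_of_isBigO_exp_neg one_half_pos ?_ ?_
  · exact (continuousOn_id.rpow_const fun t ht => Or.inl (hr.trans_le ht).ne').mul
      continuousOn_id.neg.rexp
  · have hdecay : (fun t : ℝ => t ^ s * exp (-(1 / 2) * t)) =O[atTop] fun _ => (1 : ℝ) :=
      (tendsto_rpow_mul_exp_neg_mul_atTop_nhds_zero s (1 / 2) one_half_pos).isBigO_one ℝ
    have hsplit : (fun t : ℝ => t ^ s * exp (-t)) =
        fun t => t ^ s * exp (-(1 / 2) * t) * exp (-(1 / 2) * t) := by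
      funext t
      rw [mul_assoc, ← exp_add]
      ring_nf
    rw [hsplit]
    simpa using hdecay.mul (Asymptotics.isBigO_refl _ atTop)

lemma uGamma_pos (a : ℝ) {r : ℝ} (hr : 0 < r) : 0 < uGamma a r := by
  have hpos : ∀ t ∈ Ioi r, 0 < t ^ (a - 1) * exp (-t) := fun t ht =>
    mul_pos (rpow_pos_of_pos (hr.trans ht) _) (exp_pos _)
  have hnn : 0 ≤ᵐ[volume.restrict (Ioi r)] fun t : ℝ => t ^ (a - 1) * exp (-t) :=
    (ae_restrict_mem measurableSet_Ioi).mono fun t ht => (hpos t ht).le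
  rw [uGamma, setIntegral_pos_iff_support_of_nonneg_ae hnn
    (integrableOn_rpow_mul_exp_neg_Ioi _ hr),
    inter_eq_right.2 fun t ht => Function.mem_support.2 (hpos t ht).ne']
  simp

open Topology in
lemma uGamma_add_one (a : ℝ) {r : ℝ} (hr : 0 < r) :
    uGamma (a + 1) r = a * uGamma a r + r ^ a * exp (-r) := by
  have hu : ∀ t ∈ Ioi r, HasDerivAt (fun t : ℝ => t ^ a) (a * t ^ (a - 1)) t := fun t ht =>
    hasDerivAt_rpow_const (Or.inl (hr.trans ht).ne')
  have hv : ∀ t ∈ Ioi r, HasDerivAt (fun t : ℝ => -exp (-t)) (exp (-t)) t := fun t _ => by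
    simpa using ((hasDerivAt_neg t).exp).fun_neg
  have h_zero : Tendsto (fun t : ℝ => t ^ a * -exp (-t)) (𝓝[>] r) (𝓝 (r ^ a * -exp (-r))) :=
    ((continuousAt_rpow_const r a (Or.inl hr.ne')).mul
      (continuous_neg.rexp.neg.continuousAt)).continuousWithinAt
  have h_infty : Tendsto (fun t : ℝ => t ^ a * -exp (-t)) atTop (𝓝 0) := by
    simpa using (tendsto_rpow_mul_exp_neg_mul_atTop_nhds_zero a 1 one_pos).neg
  have hu'v : IntegrableOn (fun t => a * t ^ (a - 1) * -exp (-t)) (Ioi r) := by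
    simpa [mul_assoc, IntegrableOn] using
      ((integrableOn_rpow_mul_exp_neg_Ioi (a - 1) hr).const_mul a).neg
  have hparts := integral_Ioi_mul_deriv_eq_deriv_mul hu hv
    (integrableOn_rpow_mul_exp_neg_Ioi a hr) hu'v h_zero h_infty
  have hsucc : uGamma (a + 1) r = ∫ t in Ioi r, t ^ a * exp (-t) := by simp [uGamma]
  simp only [mul_neg, integral_neg, mul_assoc, integral_const_mul] at hparts
  rw [hsucc, hparts, uGamma]
  ring

lemma integral_comp_const_add_mul_Ioi {E : Type*} [NormedAddCommGroup E] [NormedSpace ℝ E]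
    (g : ℝ → E) (ρ : ℝ) {θ : ℝ} (hθ : 0 < θ) :
    ∫ x in Ioi 0, g (ρ + θ * x) = θ⁻¹ • ∫ t in Ioi ρ, g t := by
  have himage : (fun x => ρ + θ * x) '' Ioi 0 = Ioi ρ := by
    rw [show (fun x => ρ + θ * x) = (ρ + ·) ∘ (θ * ·) from rfl, image_comp,
      image_mul_left_Ioi hθ, image_const_add_Ioi, mul_zero, add_zero]
  have hderiv : ∀ x, HasDerivAt (fun x => ρ + θ * x) θ x := fun x => by
    simpa using ((hasDerivAt_id x).const_mul θ).const_add ρ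
  calc ∫ x in Ioi 0, g (ρ + θ * x) = θ⁻¹ • ∫ x in Ioi 0, |θ| • g (ρ + θ * x) := by
        rw [abs_of_pos hθ, integral_smul, smul_smul, inv_mul_cancel₀ hθ.ne', one_smul]
    _ = θ⁻¹ • ∫ t in Ioi ρ, g t := by
        rw [← himage, integral_image_eq_integral_abs_deriv_smul measurableSet_Ioi
          (fun x _ => (hderiv x).hasDerivWithinAt)
          (fun x _ y _ h => by simpa [hθ.ne'] using h)]

lemma setIntegral_Ioi_mul_ftg (g : ℝ → ℝ) (a ρ : ℝ) {θ : ℝ} (hθ : 0 < θ) :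
    ∫ x in Ioi 0, g x * ftg a θ ρ x =
      (∫ t in Ioi ρ, g ((t - ρ) / θ) * (t ^ (a - 1) * exp (-t))) / uGamma a ρ := by
  set k := fun t => g ((t - ρ) / θ) * (t ^ (a - 1) * exp (-t)) / uGamma a ρ
  have hsubst : (fun x => g x * ftg a θ ρ x) = fun x => θ * k (ρ + θ * x) := by
    funext x
    simp only [k, ftg, add_sub_cancel_left, mul_div_cancel_left₀ x hθ.ne']
    ring
  rw [hsubst, integral_const_mul, integral_comp_const_add_mul_Ioi k ρ hθ, smul_eq_mul,
    integral_div, ← mul_assoc, mul_inv_cancel₀ hθ.ne', one_mul]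

lemma integral_Ioi_sq_sub_mul_rpow_mul_exp_neg (a c : ℝ) {r : ℝ} (hr : 0 < r) :
    ∫ t in Ioi r, (t - c) ^ 2 * (t ^ (a - 1) * exp (-t)) =
      uGamma (a + 2) r - 2 * c * uGamma (a + 1) r + c ^ 2 * uGamma a r := by
  have hexpand : ∀ t ∈ Ioi r, (t - c) ^ 2 * (t ^ (a - 1) * exp (-t)) =
      t ^ (a + 2 - 1) * exp (-t) - 2 * c * (t ^ (a + 1 - 1) * exp (-t)) +
        c ^ 2 * (t ^ (a - 1) * exp (-t)) := fun t ht => by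
    have ht0 : t ≠ 0 := (hr.trans ht).ne'
    rw [show a + 2 - 1 = a - 1 + 1 + 1 by ring, show a + 1 - 1 = a - 1 + 1 by ring,
      rpow_add_one ht0, rpow_add_one ht0]
    ring
  have hint : ∀ s : ℝ, IntegrableOn (fun t : ℝ => t ^ (s - 1) * exp (-t)) (Ioi r) := fun s =>
    integrableOn_rpow_mul_exp_neg_Ioi (s - 1) hr
  rw [setIntegral_congr_fun measurableSet_Ioi hexpand,
    integral_add ((hint _).fun_sub ((hint _).const_mul _)) ((hint _).const_mul _),
    integral_sub (hint _) ((hint _).const_mul _), integral_const_mul, integral_const_mul]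
  rfl

theorem ftg_variance (α θ ρ : ℝ) (hθ : 0 < θ) (hρ : 0 < ρ)
    (μ : ℝ) (hμ : μ = Real.exp (-ρ) * ρ ^ α / uGamma α ρ) :
    (∫ x in Set.Ioi (0:ℝ), (x - (α - ρ + μ) / θ) ^ 2 * ftg α θ ρ x) =
      (α + (1 + ρ - α) * μ - μ ^ 2) / θ ^ 2 := by
  have hG : uGamma α ρ ≠ 0 := (uGamma_pos α hρ).ne'
  have hμG : ρ ^ α * exp (-ρ) = μ * uGamma α ρ := by
    rw [hμ]
    field_simp
  have hcentre : ∀ t, ((t - ρ) / θ - (α - ρ + μ) / θ) ^ 2 * (t ^ (α - 1) * exp (-t)) =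
      (t - (α + μ)) ^ 2 * (t ^ (α - 1) * exp (-t)) / θ ^ 2 := fun t => by
    field_simp
    ring
  rw [setIntegral_Ioi_mul_ftg _ _ _ hθ]
  simp_rw [hcentre]
  rw [integral_div, integral_Ioi_sq_sub_mul_rpow_mul_exp_neg _ _ hρ,
    show α + 2 = α + 1 + 1 by ring, uGamma_add_one (α + 1) hρ, uGamma_add_one α hρ,
    rpow_add_one hρ.ne', mul_right_comm _ ρ, hμG]
  field_simp
  ring
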